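/- Let u₀ ∈ (0, 1), c ∈ ℝ and ε > 0 satisfy 0 < c − ε < u₀. Define Λ⁻(r) = log(exp(−r)·u₀ + 1 − u₀) + r·(c − ε), the cumulant generating function of the step c − y − ε for y a Bernoulli(u₀) random variable. Then Λ⁻ has a unique nonzero root r⁻, this root satisfies r⁻ > 0, and exp(r⁻) ≥ (u₀·(c − ε)^{−1} − u₀)/(1 − u₀). -/

import Mathlib

/-!
Write `a = c - ε`. Substituting `t = exp (-r)` turns `Λ⁻ r = 0` into `t * u₀ + 1 - u₀ = t ^ a`,
the vanishing of a strictly convex function of `t` (affine minus the strictly concave `t ^ a`).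
Such a function has at most two zeros and `t = 1` is one of them, so `Λ⁻` has at most one nonzero
root. At the log-likelihood ratio `r̂ = log (u₀ / a) - log ((1 - u₀) / (1 - a))` the value `Λ⁻ r̂`
is minus the Kullback–Leibler divergence of Bernoulli(`a`) from Bernoulli(`u₀`), hence negative,
while `Λ⁻ r ≥ log (1 - u₀) + r * a` is eventually positive; the intermediate value theorem gives a
root beyond `r̂ > 0`, and `exp r̂` is the stated bound.
-/

open Real Set

theorem StrictConvexOn.eq_of_apply_eq {s : Set ℝ} {f : ℝ → ℝ} (hf : StrictConvexOn ℝ s f)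
    {x y z : ℝ} (hx : x ∈ s) (hy : y ∈ s) (hz : z ∈ s) (hxy : x ≠ y) (hxz : x ≠ z)
    (hfy : f y = f x) (hfz : f z = f x) : y = z := by
  have no_sorted_triple : ∀ p ∈ s, ∀ q, ∀ r ∈ s, p < q → q < r →
      f p = f x → f q = f x → f r = f x → False := fun p hp q r hr hpq hqr hfp hfq hfr => by
    have hq : q ∈ openSegment ℝ p r := by
      rw [openSegment_eq_Ioo (hpq.trans hqr)]
      exact ⟨hpq, hqr⟩
    have := hf.lt_on_openSegment hp hr (hpq.trans hqr).ne hq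
    simp [hfp, hfq, hfr] at this
  by_contra hyz
  wlog hlt : y < z generalizing y z
  · exact this hz hy hxz hxy hfz hfy (Ne.symm hyz) ((not_lt.1 hlt).lt_of_ne (Ne.symm hyz))
  rcases hxy.lt_or_gt with hxy | hxy
  · exact no_sorted_triple x hx y z hz hxy hlt rfl hfy hfz
  rcases hxz.lt_or_gt with hxz | hxz
  · exact no_sorted_triple y hy x z hz hxy hxz hfy rfl hfz
  · exact no_sorted_triple y hy z x hx hlt hxz hfy hfz rfl

theorem mul_log_div_add_mul_log_div_lt_zero {a u : ℝ} (ha0 : 0 < a) (ha1 : a < 1)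
    (hu0 : 0 < u) (hu1 : u < 1) (hau : a ≠ u) :
    a * log (u / a) + (1 - a) * log ((1 - u) / (1 - a)) < 0 := by
  have h1a : 0 < 1 - a := by linarith
  have hlt : a * log (u / a) < a * (u / a - 1) :=
    mul_lt_mul_of_pos_left (log_lt_sub_one_of_pos (by positivity) (by
      rw [Ne, div_eq_one_iff_eq ha0.ne']; exact hau.symm)) ha0
  have hle : (1 - a) * log ((1 - u) / (1 - a)) ≤ (1 - a) * ((1 - u) / (1 - a) - 1) :=
    mul_le_mul_of_nonneg_left (log_le_sub_one_of_pos (div_pos (by linarith) h1a)) h1a.le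
  have hsum : a * (u / a - 1) + (1 - a) * ((1 - u) / (1 - a) - 1) = 0 := by
    field_simp; ring
  linarith

noncomputable def cgfSubBernoulli (u a r : ℝ) : ℝ := log (exp (-r) * u + 1 - u) + r * a

section
variable {u a : ℝ}

@[simp]
theorem cgfSubBernoulli_zero : cgfSubBernoulli u a 0 = 0 := by
  simp [cgfSubBernoulli]

theorem exp_neg_mul_add_one_sub_pos (hu0 : 0 ≤ u) (hu1 : u < 1) (r : ℝ) :
    0 < exp (-r) * u + 1 - u := by
  nlinarith [exp_pos (-r)]

theorem continuous_cgfSubBernoulli (hu0 : 0 ≤ u) (hu1 : u < 1) :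
    Continuous (cgfSubBernoulli u a) := by
  unfold cgfSubBernoulli
  exact (by fun_prop : Continuous fun r => exp (-r) * u + 1 - u).log
    (fun r => (exp_neg_mul_add_one_sub_pos hu0 hu1 r).ne') |>.add (by fun_prop)

theorem cgfSubBernoulli_eq_zero_iff (hu0 : 0 ≤ u) (hu1 : u < 1) (r : ℝ) :
    cgfSubBernoulli u a r = 0 ↔ exp (-r) * u + 1 - u - exp (-r) ^ a = 0 := by
  rw [cgfSubBernoulli, ← exp_mul, sub_eq_zero, add_eq_zero_iff_eq_neg, ← neg_mul,
    ← exp_eq_exp, exp_log (exp_neg_mul_add_one_sub_pos hu0 hu1 r)]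

theorem strictConvexOn_affine_sub_rpow (ha0 : 0 < a) (ha1 : a < 1) :
    StrictConvexOn ℝ (Ici 0) fun t : ℝ => t * u + 1 - u - t ^ a := by
  have haffine : ConvexOn ℝ (Ici 0) fun t : ℝ => t * u + 1 - u := by
    refine ⟨convex_Ici 0, fun x _ y _ p q _ _ hpq => le_of_eq ?_⟩
    simp only [smul_eq_mul]
    linear_combination (u - 1) * hpq
  exact haffine.sub_strictConcaveOn (strictConcaveOn_rpow ha0 ha1)

theorem cgfSubBernoulli_root_unique (hu0 : 0 ≤ u) (hu1 : u < 1) (ha0 : 0 < a) (ha1 : a < 1)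
    {r s : ℝ} (hr : r ≠ 0) (hs : s ≠ 0)
    (hr0 : cgfSubBernoulli u a r = 0) (hs0 : cgfSubBernoulli u a s = 0) : r = s := by
  have hexp_ne : ∀ {p q : ℝ}, p ≠ q → exp (-p) ≠ exp (-q) :=
    fun hpq h => hpq (neg_injective (exp_injective h))
  have hroot : ∀ p, cgfSubBernoulli u a p = 0 →
      exp (-p) * u + 1 - u - exp (-p) ^ a = exp (-0) * u + 1 - u - exp (-0) ^ a := fun p hp => by
    rw [(cgfSubBernoulli_eq_zero_iff hu0 hu1 p).1 hp,
      (cgfSubBernoulli_eq_zero_iff hu0 hu1 0).1 cgfSubBernoulli_zero]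
  exact neg_injective <| exp_injective <|
    (strictConvexOn_affine_sub_rpow (u := u) ha0 ha1).eq_of_apply_eq (exp_pos _).le
      (exp_pos _).le (exp_pos _).le (hexp_ne hr.symm) (hexp_ne hs.symm) (hroot r hr0) (hroot s hs0)

theorem cgfSubBernoulli_log_likelihood_ratio (ha0 : 0 < a) (ha1 : a < 1) (hu0 : 0 < u)
    (hu1 : u < 1) :
    cgfSubBernoulli u a (log (u / a) - log ((1 - u) / (1 - a))) =
      a * log (u / a) + (1 - a) * log ((1 - u) / (1 - a)) := by
  have h1a : 0 < 1 - a := by linarith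
  have h1u : 0 < 1 - u := by linarith
  have hA : exp (-(log (u / a) - log ((1 - u) / (1 - a)))) * u + 1 - u = (1 - u) / (1 - a) := by
    rw [neg_sub, exp_sub, exp_log (by positivity), exp_log (by positivity)]
    field_simp
    ring
  rw [cgfSubBernoulli, hA]
  ring

theorem exists_cgfSubBernoulli_root_ge (hu0 : 0 ≤ u) (hu1 : u < 1) (ha : 0 < a) {r₀ : ℝ}
    (hr₀ : cgfSubBernoulli u a r₀ < 0) : ∃ r, r₀ ≤ r ∧ cgfSubBernoulli u a r = 0 := by
  set R := max r₀ (-log (1 - u) / a + 1)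
  have hR : 0 < cgfSubBernoulli u a R := by
    have hlog : log (1 - u) ≤ log (exp (-R) * u + 1 - u) :=
      log_le_log (by linarith) (by nlinarith [exp_pos (-R)])
    have hRa : -log (1 - u) + a ≤ R * a := by
      have := mul_le_mul_of_nonneg_right (le_max_right r₀ (-log (1 - u) / a + 1)) ha.le
      rwa [add_mul, div_mul_cancel₀ _ ha.ne', one_mul] at this
    rw [cgfSubBernoulli]
    linarith
  obtain ⟨r, hr, hr0⟩ := intermediate_value_Icc (le_max_left r₀ _)
    (continuous_cgfSubBernoulli hu0 hu1).continuousOn ⟨hr₀.le, hR.le⟩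
  exact ⟨r, hr.1, hr0⟩

end

theorem lower_cgf_unique_root
    (u₀ c ε : ℝ) (hu₀ : u₀ ∈ Set.Ioo (0 : ℝ) 1)
    (h1 : 0 < c - ε) (h2 : c - ε < u₀)
    (Λm : ℝ → ℝ)
    (hΛ : ∀ r, Λm r = Real.log (Real.exp (-r) * u₀ + 1 - u₀) + r * (c - ε)) :
    ∃ rm : ℝ, (rm ≠ 0 ∧ Λm rm = 0) ∧
      (∀ r', r' ≠ 0 → Λm r' = 0 → r' = rm) ∧
      0 < rm ∧ (u₀ * (c - ε)⁻¹ - u₀) / (1 - u₀) ≤ Real.exp rm := by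
  obtain ⟨hu0, hu1⟩ := hu₀
  obtain rfl : Λm = cgfSubBernoulli u₀ (c - ε) := funext hΛ
  set a := c - ε
  have ha1 : a < 1 := h2.trans hu1
  set r₀ := log (u₀ / a) - log ((1 - u₀) / (1 - a))
  have hr₀ : 0 < r₀ := by
    have hlog_pos : 0 < log (u₀ / a) := log_pos ((one_lt_div h1).2 h2)
    have hlog_neg : log ((1 - u₀) / (1 - a)) < 0 :=
      log_neg (div_pos (by linarith) (by linarith)) ((div_lt_one (by linarith)).2 (by linarith))
    linarith
  have hexp : exp r₀ = (u₀ * a⁻¹ - u₀) / (1 - u₀) := by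
    rw [exp_sub, exp_log (div_pos hu0 h1), exp_log (div_pos (by linarith) (by linarith))]
    field_simp
  obtain ⟨rm, hr₀rm, hrm⟩ := exists_cgfSubBernoulli_root_ge hu0.le hu1 h1 (by
    rw [cgfSubBernoulli_log_likelihood_ratio h1 ha1 hu0 hu1]
    exact mul_log_div_add_mul_log_div_lt_zero h1 ha1 hu0 hu1 h2.ne)
  have hrm_pos : 0 < rm := hr₀.trans_le hr₀rm
  refine ⟨rm, ⟨hrm_pos.ne', hrm⟩, fun r hr hr0 =>
    cgfSubBernoulli_root_unique hu0.le hu1 h1 ha1 hr hrm_pos.ne' hr0 hrm, hrm_pos, ?_⟩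
  rw [← hexp]
  exact exp_le_exp.2 hr₀rm
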